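/- arXiv:2101.08142 — 2 statements merged into one kernel-verified Lean document; each statement's English description precedes it below -/
import Mathlib

section
/- Let G be continuously differentiable on an open interval I containing [ν, μ] and the point (ν+μ)/(2m), where m ∈ (0,1], and let W : [ν, μ] → ℝ be nonnegative, continuous, and symmetric about (ν+μ)/2. Suppose |G'| is (h,m)-convex with h nonnegative and integrable on [0,1]. Then |((G(ν)+G(μ))/2) ∫_ν^μ W(x) dx − ∫_ν^μ W(x)G(x) dx| ≤ ((μ-ν)²/4) · ‖W‖_∞ · ∫_0^1 γ·[h(γ)(|G'(ν)| + |G'(μ)|) + 2m·h(1-γ)·|G'((ν+μ)/(2m))|] dγ, where ‖W‖_∞ = sup_{t ∈ [ν,μ]} W(t). -/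
/-!
Put `p(x) = ∫_ν^x W - ½ ∫_ν^μ W`. Integration by parts turns the left-hand side into
`∫_ν^μ G' p`, and the symmetry of `W` gives `p(x) = ½ ∫_{ν+μ-x}^x W`, hence
`|p(x)| ≤ ‖W‖_∞ |x - (ν+μ)/2|`. On each half of `[ν, μ]` write
`x = γ e + (1 - γ)(ν+μ)/2 = γ e + m (1 - γ) (ν+μ)/(2m)` with `e ∈ {ν, μ}`; then
`|x - (ν+μ)/2| = γ (μ-ν)/2`, and the `(h,m)`-convexity of `|G'|` bounds `|G'(x)|`.
-/

open Set intervalIntegral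
open MeasureTheory (volume)

noncomputable def fejerKernel (W : ℝ → ℝ) (a b x : ℝ) : ℝ :=
  (∫ t in a..x, W t) - (∫ t in a..b, W t) / 2

def HMConvexOn (h : ℝ → ℝ) (m : ℝ) (s : Set ℝ) (f : ℝ → ℝ) : Prop :=
  ∀ x ∈ s, ∀ y ∈ s, ∀ γ ∈ Icc (0 : ℝ) 1,
    f (γ * x + m * (1 - γ) * y) ≤ h γ * f x + m * h (1 - γ) * f y

section FejerKernel

variable {W : ℝ → ℝ} {a b : ℝ}

theorem ContinuousOn.intervalIntegrable_of_mem_Icc (hW : ContinuousOn W (Icc a b)) {u v : ℝ}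
    (hu : u ∈ Icc a b) (hv : v ∈ Icc a b) : IntervalIntegrable W volume u v :=
  (hW.mono (uIcc_subset_Icc hu hv)).intervalIntegrable

theorem continuousOn_fejerKernel (hW : IntervalIntegrable W volume a b) :
    ContinuousOn (fejerKernel W a b) (uIcc a b) :=
  (continuousOn_primitive_interval' hW left_mem_uIcc).sub continuousOn_const

theorem trapezoid_mul_integral_sub_integral_mul_eq {G G' : ℝ → ℝ} (hab : a ≤ b)
    (hW : ContinuousOn W (Icc a b)) (hGc : ContinuousOn G (Icc a b))
    (hG : ∀ x ∈ Ioo a b, HasDerivAt G (G' x) x) (hG' : IntervalIntegrable G' volume a b) :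
    (G a + G b) / 2 * (∫ x in a..b, W x) - ∫ x in a..b, W x * G x
      = ∫ x in a..b, G' x * fejerKernel W a b x := by
  have hWi : IntervalIntegrable W volume a b := hW.intervalIntegrable_of_Icc hab
  have hPc : ContinuousOn (fun x => ∫ t in a..x, W t) (uIcc a b) :=
    continuousOn_primitive_interval' hWi left_mem_uIcc
  have hP : ∀ x ∈ Ioo a b, HasDerivAt (fun x => ∫ t in a..x, W t) (W x) x := fun x hx =>
    integral_hasDerivAt_right (hW.intervalIntegrable_of_mem_Icc (left_mem_Icc.2 hab)
      (Ioo_subset_Icc_self hx))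
      ((hW.mono Ioo_subset_Icc_self).stronglyMeasurableAtFilter isOpen_Ioo x hx)
      (hW.continuousAt (Icc_mem_nhds hx.1 hx.2))
  have hparts : ∫ x in a..b, G x * W x
      = G b * (∫ t in a..b, W t) - ∫ x in a..b, G' x * ∫ t in a..x, W t := by
    rw [integral_mul_deriv_eq_deriv_mul_of_hasDerivAt (by rwa [uIcc_of_le hab]) hPc
      (by simpa [hab] using hG) (by simpa [hab] using hP) hG' hWi]
    simp
  have hftc : ∫ x in a..b, G' x = G b - G a :=
    integral_eq_sub_of_hasDerivAt_of_le hab hGc hG hG'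
  have hsplit : ∫ x in a..b, G' x * fejerKernel W a b x
      = (∫ x in a..b, G' x * ∫ t in a..x, W t)
        - (∫ t in a..b, W t) / 2 * ∫ x in a..b, G' x := by
    simp only [fejerKernel, mul_sub]
    rw [integral_sub (hG'.mul_continuousOn hPc) (hG'.mul_const _), integral_mul_const]
    ring
  simp only [mul_comm (W _)]
  rw [hsplit, hparts, hftc]
  ring

theorem fejerKernel_eq_half_integral (hW : ContinuousOn W (Icc a b))
    (hsym : ∀ x ∈ Icc a b, W (a + b - x) = W x) {x : ℝ} (hx : x ∈ Icc a b) :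
    fejerKernel W a b x = (∫ t in a + b - x..x, W t) / 2 := by
  have hx' : a + b - x ∈ Icc a b := ⟨by linarith [hx.2], by linarith [hx.1]⟩
  have ha : a ∈ Icc a b := left_mem_Icc.2 (hx.1.trans hx.2)
  have hb : b ∈ Icc a b := right_mem_Icc.2 (hx.1.trans hx.2)
  have hreflect : ∫ t in a..a + b - x, W t = ∫ t in x..b, W t := by
    calc ∫ t in a..a + b - x, W t = ∫ t in a..a + b - x, W (a + b - t) :=
          integral_congr fun t ht => (hsym t (uIcc_subset_Icc ha hx' ht)).symm
      _ = ∫ t in x..b, W t := by rw [integral_comp_sub_left]; ring_nf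
  have h1 := integral_add_adjacent_intervals (hW.intervalIntegrable_of_mem_Icc ha hx')
    (hW.intervalIntegrable_of_mem_Icc hx' hx)
  have h2 := integral_add_adjacent_intervals (hW.intervalIntegrable_of_mem_Icc ha hx)
    (hW.intervalIntegrable_of_mem_Icc hx hb)
  rw [fejerKernel]
  linarith

theorem abs_fejerKernel_le {M : ℝ} (hW : ContinuousOn W (Icc a b))
    (hsym : ∀ x ∈ Icc a b, W (a + b - x) = W x) (hW0 : ∀ t ∈ Icc a b, 0 ≤ W t)
    (hWM : ∀ t ∈ Icc a b, W t ≤ M) {x : ℝ} (hx : x ∈ Icc a b) :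
    |fejerKernel W a b x| ≤ M * |x - (a + b) / 2| := by
  have hx' : a + b - x ∈ Icc a b := ⟨by linarith [hx.2], by linarith [hx.1]⟩
  have hbound : ‖∫ t in a + b - x..x, W t‖ ≤ M * |x - (a + b - x)| := by
    refine norm_integral_le_of_norm_le_const fun t ht => ?_
    have ht' := uIcc_subset_Icc hx' hx (uIoc_subset_uIcc ht)
    rw [Real.norm_eq_abs, abs_of_nonneg (hW0 t ht')]
    exact hWM t ht'
  have hlen : |x - (a + b - x)| = 2 * |x - (a + b) / 2| := by
    rw [show x - (a + b - x) = 2 * (x - (a + b) / 2) by ring, abs_mul, abs_two]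
  rw [fejerKernel_eq_half_integral hW hsym hx, abs_div, abs_two]
  rw [hlen, Real.norm_eq_abs] at hbound
  linarith

theorem abs_trapezoid_mul_integral_sub_integral_mul_le {G G' : ℝ → ℝ} {M : ℝ}
    (hab : a ≤ b)
    (hW : ContinuousOn W (Icc a b)) (hsym : ∀ x ∈ Icc a b, W (a + b - x) = W x)
    (hW0 : ∀ t ∈ Icc a b, 0 ≤ W t) (hWM : ∀ t ∈ Icc a b, W t ≤ M)
    (hGc : ContinuousOn G (Icc a b)) (hG : ∀ x ∈ Ioo a b, HasDerivAt G (G' x) x)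
    (hG' : ContinuousOn G' (Icc a b)) :
    |(G a + G b) / 2 * (∫ x in a..b, W x) - ∫ x in a..b, W x * G x|
      ≤ M * ∫ x in a..b, |x - (a + b) / 2| * |G' x| := by
  have hG'i : IntervalIntegrable G' volume a b := hG'.intervalIntegrable_of_Icc hab
  have hK : ContinuousOn (fejerKernel W a b) (Icc a b) := by
    simpa [uIcc_of_le hab] using continuousOn_fejerKernel (hW.intervalIntegrable_of_Icc hab)
  rw [trapezoid_mul_integral_sub_integral_mul_eq hab hW hGc hG hG'i, ← integral_const_mul]
  refine (abs_integral_le_integral_abs hab).trans (integral_mono_on hab ?_ ?_ fun x hx => ?_)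
  · exact ((hG'.mul hK).abs).intervalIntegrable_of_Icc hab
  · exact (continuousOn_const.mul ((continuousOn_id.sub continuousOn_const).abs.mul
      hG'.abs)).intervalIntegrable_of_Icc hab
  · calc |G' x * fejerKernel W a b x| ≤ |G' x| * (M * |x - (a + b) / 2|) := by
          rw [abs_mul]
          exact mul_le_mul_of_nonneg_left (abs_fejerKernel_le hW hsym hW0 hWM hx) (abs_nonneg _)
      _ = M * (|x - (a + b) / 2| * |G' x|) := by ring

end FejerKernel

theorem ContinuousOn.comp_convexCombo {f : ℝ → ℝ} {x y : ℝ}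
    (hf : ContinuousOn f (uIcc x y)) :
    ContinuousOn (fun γ => f (γ * x + (1 - γ) * y)) (Icc 0 1) := by
  refine hf.comp (by fun_prop) fun γ hγ => ?_
  rw [← segment_eq_uIcc]
  exact ⟨γ, 1 - γ, hγ.1, by linarith [hγ.2], by ring, by simp⟩

theorem integral_eq_sub_mul_integral_comp_convexCombo (f : ℝ → ℝ) (p q : ℝ) :
    ∫ x in q..p, f x = (p - q) * ∫ γ in (0 : ℝ)..1, f (γ * q + (1 - γ) * p) := by
  have h := smul_integral_comp_mul_add (a := 0) (b := 1) f (q - p) p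
  simp only [mul_zero, zero_add, mul_one, sub_add_cancel, smul_eq_mul] at h
  rw [integral_symm, ← h, show p - q = -(q - p) by ring, neg_mul]
  congr 2
  refine integral_congr fun γ _ => ?_
  ring_nf

theorem integral_abs_sub_midpoint_mul_eq {f : ℝ → ℝ} {a b : ℝ} (hab : a ≤ b)
    (hf : ContinuousOn f (Icc a b)) :
    ∫ x in a..b, |x - (a + b) / 2| * f x
      = (b - a) ^ 2 / 4 * ∫ γ in (0 : ℝ)..1,
          γ * (f (γ * a + (1 - γ) * ((a + b) / 2)) + f (γ * b + (1 - γ) * ((a + b) / 2))) := by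
  set c := (a + b) / 2 with hc_def
  have hc : c ∈ Icc a b := ⟨by linarith, by linarith⟩
  have hac : uIcc a c ⊆ Icc a b := uIcc_subset_Icc (left_mem_Icc.2 hab) hc
  have hbc : uIcc b c ⊆ Icc a b := uIcc_subset_Icc (right_mem_Icc.2 hab) hc
  have hF : ContinuousOn (fun x => |x - c| * f x) (Icc a b) :=
    ((continuousOn_id.sub continuousOn_const).abs).mul hf
  have hhalf : ∀ e, |e - c| = (b - a) / 2 →
      ∫ γ in (0 : ℝ)..1, |γ * e + (1 - γ) * c - c| * f (γ * e + (1 - γ) * c)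
        = (b - a) / 2 * ∫ γ in (0 : ℝ)..1, γ * f (γ * e + (1 - γ) * c) := by
    intro e he
    rw [← integral_const_mul]
    refine integral_congr fun γ hγ => ?_
    rw [uIcc_of_le zero_le_one] at hγ
    rw [show γ * e + (1 - γ) * c - c = γ * (e - c) by ring, abs_mul, abs_of_nonneg hγ.1, he]
    ring
  have hcont : ∀ e, uIcc e c ⊆ Icc a b →
      IntervalIntegrable (fun γ => γ * f (γ * e + (1 - γ) * c)) volume 0 1 := fun e he =>
    (continuousOn_id.mul ((hf.mono he).comp_convexCombo)).intervalIntegrable_of_Icc zero_le_one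
  rw [← integral_add_adjacent_intervals ((hF.mono hac).intervalIntegrable)
      ((hF.mono (uIcc_comm b c ▸ hbc)).intervalIntegrable),
    integral_symm b c, integral_eq_sub_mul_integral_comp_convexCombo _ c a,
    integral_eq_sub_mul_integral_comp_convexCombo _ c b,
    hhalf a (by rw [abs_of_nonpos (by linarith)]; ring),
    hhalf b (by rw [abs_of_nonneg (by linarith)]; ring)]
  have hsum : ∫ γ in (0 : ℝ)..1, γ * (f (γ * a + (1 - γ) * c) + f (γ * b + (1 - γ) * c))
      = (∫ γ in (0 : ℝ)..1, γ * f (γ * a + (1 - γ) * c))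
        + ∫ γ in (0 : ℝ)..1, γ * f (γ * b + (1 - γ) * c) := by
    simp only [mul_add]
    exact integral_add (hcont a hac) (hcont b hbc)
  rw [hsum, hc_def]
  ring

theorem HMConvexOn.integral_mul_add_le {h f : ℝ → ℝ} {m : ℝ} {s : Set ℝ}
    (hf : HMConvexOn h m s f) {x x' y : ℝ} (hx : x ∈ s) (hx' : x' ∈ s) (hy : y ∈ s)
    (hh : IntervalIntegrable h volume 0 1)
    (hint : IntervalIntegrable (fun γ =>
      γ * (f (γ * x + m * (1 - γ) * y) + f (γ * x' + m * (1 - γ) * y))) volume 0 1) :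
    ∫ γ in (0 : ℝ)..1, γ * (f (γ * x + m * (1 - γ) * y) + f (γ * x' + m * (1 - γ) * y))
      ≤ ∫ γ in (0 : ℝ)..1, γ * (h γ * (f x + f x') + 2 * m * h (1 - γ) * f y) := by
  have hh' : IntervalIntegrable (fun γ => h (1 - γ)) volume 0 1 := by
    simpa using (hh.comp_sub_left 1).symm
  have hbound : IntervalIntegrable
      (fun γ => γ * (h γ * (f x + f x') + 2 * m * h (1 - γ) * f y)) volume 0 1 := by
    have := (hh.mul_continuousOn (g := fun γ => γ * (f x + f x')) (by fun_prop)).add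
      (hh'.mul_continuousOn (g := fun γ => γ * (2 * m * f y)) (by fun_prop))
    convert this using 2 with γ
    ring
  refine integral_mono_on zero_le_one hint hbound fun γ hγ => ?_
  calc γ * (f (γ * x + m * (1 - γ) * y) + f (γ * x' + m * (1 - γ) * y))
      ≤ γ * ((h γ * f x + m * h (1 - γ) * f y) + (h γ * f x' + m * h (1 - γ) * f y)) :=
        mul_le_mul_of_nonneg_left (add_le_add (hf x hx y hy γ hγ) (hf x' hx' y hy γ hγ)) hγ.1
    _ = γ * (h γ * (f x + f x') + 2 * m * h (1 - γ) * f y) := by ring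

theorem HMConvexOn.integral_abs_sub_midpoint_mul_le {h f : ℝ → ℝ} {m ν μ : ℝ}
    {s : Set ℝ}
    (hf : HMConvexOn h m s f) (hm : m ≠ 0) (hνμ : ν ≤ μ) (hs : Icc ν μ ⊆ s)
    (hc : (ν + μ) / (2 * m) ∈ s) (hfc : ContinuousOn f (Icc ν μ))
    (hh : IntervalIntegrable h volume 0 1) :
    ∫ x in ν..μ, |x - (ν + μ) / 2| * f x
      ≤ (μ - ν) ^ 2 / 4 * ∫ γ in (0 : ℝ)..1,
          γ * (h γ * (f ν + f μ) + 2 * m * h (1 - γ) * f ((ν + μ) / (2 * m))) := by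
  have hν : ν ∈ Icc ν μ := left_mem_Icc.2 hνμ
  have hμ : μ ∈ Icc ν μ := right_mem_Icc.2 hνμ
  have hmid : (ν + μ) / 2 ∈ Icc ν μ := ⟨by linarith, by linarith⟩
  have hmc : m * ((ν + μ) / (2 * m)) = (ν + μ) / 2 := by field_simp
  have hpt : ∀ γ x,
      γ * x + (1 - γ) * ((ν + μ) / 2) = γ * x + m * (1 - γ) * ((ν + μ) / (2 * m)) :=
    fun γ x => by rw [← hmc]; ring
  have hint : IntervalIntegrable (fun γ => γ * (f (γ * ν + (1 - γ) * ((ν + μ) / 2))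
      + f (γ * μ + (1 - γ) * ((ν + μ) / 2)))) volume 0 1 := by
    refine (continuousOn_id.mul (ContinuousOn.add ?_ ?_)).intervalIntegrable_of_Icc zero_le_one
    · exact (hfc.mono (uIcc_subset_Icc hν hmid)).comp_convexCombo
    · exact (hfc.mono (uIcc_subset_Icc hμ hmid)).comp_convexCombo
  rw [integral_abs_sub_midpoint_mul_eq hνμ hfc]
  simp only [hpt] at hint ⊢
  gcongr
  exact hf.integral_mul_add_le (hs hν) (hs hμ) hc hh hint

theorem fejer_bound_hm_general
    (ν μ m a b : ℝ) (hνμ : ν < μ) (hm : m ∈ Set.Ioc (0:ℝ) 1)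
    (hab : Set.Icc ν μ ⊆ Set.Ioo a b) (hmid : (ν + μ) / (2 * m) ∈ Set.Ioo a b)
    (h : ℝ → ℝ)
    (hhint : IntervalIntegrable h MeasureTheory.volume 0 1)
    (G W : ℝ → ℝ)
    (hG : ContDiffOn ℝ 1 G (Set.Ioo a b))
    (hG' : ∀ x ∈ Set.Ioo a b, ∀ y ∈ Set.Ioo a b, ∀ γ ∈ Set.Icc (0:ℝ) 1,
      |deriv G (γ * x + m * (1 - γ) * y)| ≤ h γ * |deriv G x| + m * h (1 - γ) * |deriv G y|)
    (hWnonneg : ∀ x ∈ Set.Icc ν μ, 0 ≤ W x)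
    (hWcont : ContinuousOn W (Set.Icc ν μ))
    (hWsym : ∀ x ∈ Set.Icc ν μ, W (ν + μ - x) = W x) :
    |(G ν + G μ) / 2 * (∫ x in ν..μ, W x) - ∫ x in ν..μ, W x * G x|
      ≤ (μ - ν) ^ 2 / 4 * sSup (W '' Set.Icc ν μ) *
        ∫ γ in (0:ℝ)..1,
          γ * (h γ * (|deriv G ν| + |deriv G μ|)
            + 2 * m * h (1 - γ) * |deriv G ((ν + μ) / (2 * m))|) := by
  set M := sSup (W '' Icc ν μ)
  have hconv : HMConvexOn h m (Ioo a b) fun x => |deriv G x| := hG'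
  have hWM : ∀ t ∈ Icc ν μ, W t ≤ M := fun t ht =>
    le_csSup (isCompact_Icc.image_of_continuousOn hWcont).bddAbove (mem_image_of_mem W ht)
  have hν : ν ∈ Icc ν μ := left_mem_Icc.2 hνμ.le
  have hM : 0 ≤ M := (hWnonneg ν hν).trans (hWM ν hν)
  have hGd : ∀ x ∈ Icc ν μ, HasDerivAt G (deriv G x) x := fun x hx =>
    ((hG.differentiableOn one_ne_zero).differentiableAt (isOpen_Ioo.mem_nhds (hab hx))).hasDerivAt
  have hG'c : ContinuousOn (deriv G) (Icc ν μ) :=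
    (hG.continuousOn_deriv_of_isOpen isOpen_Ioo le_rfl).mono hab
  calc |(G ν + G μ) / 2 * (∫ x in ν..μ, W x) - ∫ x in ν..μ, W x * G x|
      ≤ M * ∫ x in ν..μ, |x - (ν + μ) / 2| * |deriv G x| :=
        abs_trapezoid_mul_integral_sub_integral_mul_le hνμ.le hWcont hWsym hWnonneg hWM
          (fun x hx => (hGd x hx).continuousAt.continuousWithinAt)
          (fun x hx => hGd x (Ioo_subset_Icc_self hx)) hG'c
    _ ≤ M * ((μ - ν) ^ 2 / 4 * ∫ γ in (0 : ℝ)..1,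
          γ * (h γ * (|deriv G ν| + |deriv G μ|)
            + 2 * m * h (1 - γ) * |deriv G ((ν + μ) / (2 * m))|)) := by
        gcongr
        exact hconv.integral_abs_sub_midpoint_mul_le hm.1.ne' hνμ.le hab hmid hG'c.abs hhint
    _ = _ := by ring

theorem fejer_bound_hm
    (ν μ m a b : ℝ) (hνμ : ν < μ) (hm : m ∈ Set.Ioc (0:ℝ) 1)
    (hab : Set.Icc ν μ ⊆ Set.Ioo a b) (hmid : (ν + μ) / (2 * m) ∈ Set.Ioo a b)
    (h : ℝ → ℝ) (hh : ∀ γ ∈ Set.Icc (0:ℝ) 1, 0 ≤ h γ)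
    (hhint : IntervalIntegrable h MeasureTheory.volume 0 1)
    (G W : ℝ → ℝ)
    (hG : ContDiffOn ℝ 1 G (Set.Ioo a b))
    (hG' : ∀ x ∈ Set.Ioo a b, ∀ y ∈ Set.Ioo a b, ∀ γ ∈ Set.Icc (0:ℝ) 1,
      |deriv G (γ * x + m * (1 - γ) * y)| ≤ h γ * |deriv G x| + m * h (1 - γ) * |deriv G y|)
    (hWnonneg : ∀ x ∈ Set.Icc ν μ, 0 ≤ W x)
    (hWcont : ContinuousOn W (Set.Icc ν μ))
    (hWsym : ∀ x ∈ Set.Icc ν μ, W (ν + μ - x) = W x) :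
    |(G ν + G μ) / 2 * (∫ x in ν..μ, W x) - ∫ x in ν..μ, W x * G x|
      ≤ (μ - ν) ^ 2 / 4 * sSup (W '' Set.Icc ν μ) *
        ∫ γ in (0:ℝ)..1,
          γ * (h γ * (|deriv G ν| + |deriv G μ|)
            + 2 * m * h (1 - γ) * |deriv G ((ν + μ) / (2 * m))|) :=
  fejer_bound_hm_general ν μ m a b hνμ hm hab hmid h hhint G W hG hG' hWnonneg hWcont hWsym
end

section
/- Let ν = x₀ < x₁ < ... < x_i = μ be a partition of [ν, μ], m ∈ (0,1], and let G be continuously differentiable on an interval containing [ν, μ] and the points (x_j + x_{j+1})/(2m), with |G'| being m-convex. Let W : [ν, μ] → ℝ be nonnegative, continuous, and symmetric about each midpoint (x_j + x_{j+1})/2 on each subinterval [x_j, x_{j+1}]. Define T(G,W) = Σ_{j=0}^{i-1} ((G(x_j) + G(x_{j+1}))/2) ∫_{x_j}^{x_{j+1}} W(t) dt. Then |∫_ν^μ W(t)G(t) dt − T(G,W)| ≤ Σ_{j=0}^{i-1} ((x_{j+1} - x_j)²/4) · ‖W‖_∞ · [ (1/3)(|G'(x_j)| + |G'(x_{j+1})|)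 + (m/3)·|G'((x_{j+1}+x_j)/(2m))| ]. -/
/-!
On a subinterval `[p, q]` with midpoint `c`, integration by parts against the kernel
`K s = ∫_c^s W` turns the local error into `-∫_p^q G' K`. Symmetry of `W` makes `K` odd about `c`
(so `K q = ½ ∫_p^q W`, which produces the trapezoidal weight), and folding the right half onto the
left gives `∫_p^c (G' t - G' (p + q - t)) K t`. There `|K t| ≤ ‖W‖_∞ (c - t)`, and m-convexity of
`|G'|` along the segments from `p` and from `q` to `c = m · (p + q) / (2m)` bounds
`|G' t| + |G' (p + q - t)|` by an affine function of `t`; integrating the resulting quadratic gives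
the local bound, and summing over the partition gives the theorem.
-/

open Set MeasureTheory

def MConvexOn (m : ℝ) (S : Set ℝ) (f : ℝ → ℝ) : Prop :=
  ∀ u ∈ S, ∀ v ∈ S, ∀ γ ∈ Icc (0 : ℝ) 1,
    f (γ * u + m * (1 - γ) * v) ≤ γ * f u + m * (1 - γ) * f v

theorem MConvexOn.le_of_mem_uIcc {m : ℝ} {S : Set ℝ} {f : ℝ → ℝ} (hf : MConvexOn m S f)
    {u v s : ℝ} (hu : u ∈ S) (hv : v ∈ S) (huv : u ≠ m * v) (hs : s ∈ uIcc u (m * v)) :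
    f s ≤ ((m * v - s) * f u + (s - u) * (m * f v)) / (m * v - u) := by
  have hd : m * v - u ≠ 0 := sub_ne_zero.mpr huv.symm
  set γ := (m * v - s) / (m * v - u)
  have hγ : γ ∈ Icc (0 : ℝ) 1 := by
    rcases mem_uIcc.mp hs with ⟨h₁, h₂⟩ | ⟨h₁, h₂⟩
    · have : 0 < m * v - u := by grind
      exact ⟨div_nonneg (by linarith) this.le, (div_le_one this).mpr (by linarith)⟩
    · have : m * v - u < 0 := by grind
      exact ⟨div_nonneg_of_nonpos (by linarith) this.le, (div_le_one_of_neg this).mpr (by linarith)⟩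
  have hs_eq : γ * u + m * (1 - γ) * v = s := by
    simp only [γ]; field_simp; ring
  calc f s = f (γ * u + m * (1 - γ) * v) := by rw [hs_eq]
    _ ≤ γ * f u + m * (1 - γ) * f v := hf u hu v hv γ hγ
    _ = _ := by simp only [γ]; field_simp; ring

theorem MConvexOn.abs_sub_reflect_le {f : ℝ → ℝ} {m : ℝ} {S : Set ℝ}
    (hf : MConvexOn m S fun t => |f t|) (hm : m ≠ 0) {p q : ℝ} (hpq : p < q) (hp : p ∈ S)
    (hq : q ∈ S) (hmid : (p + q) / (2 * m) ∈ S) {t : ℝ} (ht : t ∈ Icc p ((p + q) / 2)) :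
    |f t - f (p + q - t)| ≤ (((p + q) / 2 - t) * (|f p| + |f q|)
      + (t - p) * (2 * m * |f ((p + q) / (2 * m))|)) / ((q - p) / 2) := by
  have hmv : m * ((p + q) / (2 * m)) = (p + q) / 2 := by field_simp
  have hleft := hf.le_of_mem_uIcc hp hmid (by rw [hmv]; linarith)
    (by rw [hmv, uIcc_of_le (by linarith)]; exact ht)
  have hright := hf.le_of_mem_uIcc (s := p + q - t) hq hmid (by rw [hmv]; linarith)
    (by rw [hmv, uIcc_of_ge (by linarith)]; constructor <;> linarith [ht.1, ht.2])
  rw [hmv] at hleft hright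
  calc |f t - f (p + q - t)| ≤ |f t| + |f (p + q - t)| := abs_sub _ _
    _ ≤ _ := add_le_add hleft hright
    _ = _ := by
      rw [show (p + q) / 2 - p = (q - p) / 2 by ring, show (p + q) / 2 - q = -((q - p) / 2) by ring,
        div_neg, ← sub_eq_add_neg, ← sub_div]
      ring

theorem integral_sub_mul_interp (u w α β : ℝ) :
    ∫ t in u..w, (w - t) * ((w - t) * α + (t - u) * β) = (w - u) ^ 3 * (α / 3 + β / 6) := by
  have h t : (w - t) * ((w - t) * α + (t - u) * β)
      = (α - β) * (w - t) ^ 2 + (w - u) * β * (w - t) := by ring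
  simp only [h]
  rw [intervalIntegral.integral_add, intervalIntegral.integral_const_mul,
    intervalIntegral.integral_const_mul, intervalIntegral.integral_comp_sub_left (· ^ 2),
    intervalIntegral.integral_comp_sub_left (fun x => x), integral_pow, integral_id]
  · ring
  all_goals exact Continuous.intervalIntegrable (by fun_prop) _ _

theorem integral_eq_integral_left_half_add_reflect {g : ℝ → ℝ} {p q : ℝ}
    (hg : IntervalIntegrable g volume p q) :
    ∫ t in p..q, g t = ∫ t in p..(p + q) / 2, (g t + g (p + q - t)) := by
  have hc : (p + q) / 2 ∈ uIcc p q := by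
    rcases le_total p q with h | h
    · exact Or.inl ⟨by linarith, by linarith⟩ |> mem_uIcc.mpr
    · exact Or.inr ⟨by linarith, by linarith⟩ |> mem_uIcc.mpr
  have hpc : IntervalIntegrable g volume p ((p + q) / 2) := hg.mono_set (uIcc_subset_uIcc_left hc)
  have hcq : IntervalIntegrable g volume ((p + q) / 2) q := hg.mono_set (uIcc_subset_uIcc_right hc)
  have hreflect : ∫ t in p..(p + q) / 2, g (p + q - t) = ∫ t in (p + q) / 2..q, g t := by
    rw [intervalIntegral.integral_comp_sub_left g (p + q)]
    congr 1 <;> ring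
  rw [intervalIntegral.integral_add hpc, hreflect,
    intervalIntegral.integral_add_adjacent_intervals hpc hcq]
  have h := hcq.comp_sub_left (p + q)
  rw [add_sub_cancel_right, show p + q - (p + q) / 2 = (p + q) / 2 by ring] at h
  exact h.symm

noncomputable def trapezoidKernel (W : ℝ → ℝ) (p q s : ℝ) : ℝ := ∫ t in (p + q) / 2..s, W t

section trapezoidKernel

variable {W : ℝ → ℝ} {p q : ℝ}

theorem trapezoidKernel_reflect (hsym : ∀ t ∈ Icc p q, W (p + q - t) = W t) {t : ℝ}
    (ht : t ∈ Icc p q) : trapezoidKernel W p q (p + q - t) = -trapezoidKernel W p q t := by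
  have hsub : uIcc t ((p + q) / 2) ⊆ Icc p q :=
    uIcc_subset_Icc ht ⟨by linarith [ht.1, ht.2], by linarith [ht.1, ht.2]⟩
  calc trapezoidKernel W p q (p + q - t) = ∫ x in t..(p + q) / 2, W (p + q - x) := by
        rw [intervalIntegral.integral_comp_sub_left W (p + q), trapezoidKernel]
        congr 1; ring
    _ = ∫ x in t..(p + q) / 2, W x :=
        intervalIntegral.integral_congr fun x hx => hsym x (hsub hx)
    _ = -trapezoidKernel W p q t := intervalIntegral.integral_symm _ _

theorem trapezoidKernel_right (hpq : p ≤ q) (hW : IntervalIntegrable W volume p q)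
    (hsym : ∀ t ∈ Icc p q, W (p + q - t) = W t) :
    trapezoidKernel W p q q = (∫ t in p..q, W t) / 2 := by
  have hleft : trapezoidKernel W p q p = -trapezoidKernel W p q q := by
    simpa using trapezoidKernel_reflect hsym (right_mem_Icc.mpr hpq)
  have hc : (p + q) / 2 ∈ uIcc p q := by rw [uIcc_of_le hpq]; constructor <;> linarith
  rw [← intervalIntegral.integral_add_adjacent_intervals (hW.mono_set (uIcc_subset_uIcc_left hc))
    (hW.mono_set (uIcc_subset_uIcc_right hc)), intervalIntegral.integral_symm]
  change _ = (-trapezoidKernel W p q p + trapezoidKernel W p q q) / 2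
  rw [hleft]; ring

theorem abs_trapezoidKernel_le {M s : ℝ} (hM : ∀ t ∈ Icc p q, |W t| ≤ M) (hs : s ∈ Icc p q) :
    |trapezoidKernel W p q s| ≤ M * |s - (p + q) / 2| := by
  have hsub : uIcc ((p + q) / 2) s ⊆ Icc p q :=
    uIcc_subset_Icc ⟨by linarith [hs.1, hs.2], by linarith [hs.1, hs.2]⟩ hs
  simpa only [Real.norm_eq_abs, trapezoidKernel] using
    intervalIntegral.norm_integral_le_of_norm_le_const fun t ht =>
      (Real.norm_eq_abs (W t)).trans_le (hM t (hsub (uIoc_subset_uIcc ht)))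

theorem continuousOn_trapezoidKernel (hW : ContinuousOn W (Icc p q)) (hpq : p ≤ q) :
    ContinuousOn (trapezoidKernel W p q) (Icc p q) := by
  rw [← uIcc_of_le hpq] at hW ⊢
  exact intervalIntegral.continuousOn_primitive_interval' hW.intervalIntegrable
    (by rw [uIcc_of_le hpq]; constructor <;> linarith)

theorem hasDerivAt_trapezoidKernel (hW : ContinuousOn W (Icc p q)) {s : ℝ} (hs : s ∈ Ioo p q) :
    HasDerivAt (trapezoidKernel W p q) (W s) s := by
  have hsub : uIcc ((p + q) / 2) s ⊆ Icc p q :=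
    uIcc_subset_Icc ⟨by linarith [hs.1, hs.2], by linarith [hs.1, hs.2]⟩ (Ioo_subset_Icc_self hs)
  exact intervalIntegral.integral_hasDerivAt_right ((hW.mono hsub).intervalIntegrable)
    ((hW.mono Ioo_subset_Icc_self).stronglyMeasurableAtFilter isOpen_Ioo s hs)
    (hW.continuousAt (Icc_mem_nhds hs.1 hs.2))

end trapezoidKernel

theorem integral_mul_sub_trapezoid_eq {W G G' : ℝ → ℝ} {p q : ℝ} (hpq : p ≤ q)
    (hW : ContinuousOn W (Icc p q)) (hsym : ∀ t ∈ Icc p q, W (p + q - t) = W t)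
    (hG : ContinuousOn G (Icc p q)) (hG' : ∀ t ∈ Ioo p q, HasDerivAt G (G' t) t)
    (hG'int : IntervalIntegrable G' volume p q) :
    (∫ t in p..q, W t * G t) - (G p + G q) / 2 * ∫ t in p..q, W t
      = -∫ t in p..q, G' t * trapezoidKernel W p q t := by
  have hWint : IntervalIntegrable W volume p q := hW.intervalIntegrable_of_Icc hpq
  have hleft : trapezoidKernel W p q p = -trapezoidKernel W p q q := by
    simpa using trapezoidKernel_reflect hsym (right_mem_Icc.mpr hpq)
  have hparts := intervalIntegral.integral_mul_deriv_eq_deriv_mul_of_hasDerivAt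
    (by rwa [uIcc_of_le hpq]) (by rw [uIcc_of_le hpq]; exact continuousOn_trapezoidKernel hW hpq)
    (by rw [min_eq_left hpq, max_eq_right hpq]; exact hG')
    (by rw [min_eq_left hpq, max_eq_right hpq]; exact fun s hs => hasDerivAt_trapezoidKernel hW hs)
    hG'int hWint
  simp only [mul_comm (W _)]
  rw [hparts, hleft, trapezoidKernel_right hpq hWint hsym]
  ring

theorem abs_integral_mul_trapezoidKernel_le {f W : ℝ → ℝ} {p q M α β : ℝ} (hpq : p < q)
    (hf : ContinuousOn f (Icc p q)) (hW : ContinuousOn W (Icc p q))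
    (hsym : ∀ t ∈ Icc p q, W (p + q - t) = W t) (hWM : ∀ t ∈ Icc p q, |W t| ≤ M)
    (hf_le : ∀ t ∈ Icc p ((p + q) / 2),
      |f t - f (p + q - t)| ≤ (((p + q) / 2 - t) * α + (t - p) * β) / ((q - p) / 2)) :
    |∫ t in p..q, f t * trapezoidKernel W p q t| ≤ (q - p) ^ 2 / 4 * M * (α / 3 + β / 6) := by
  set c := (p + q) / 2 with hc
  set K := trapezoidKernel W p q
  have hK : ContinuousOn K (Icc p q) := continuousOn_trapezoidKernel hW hpq.le
  have hfold : ∫ t in p..q, f t * K t = ∫ t in p..c, (f t - f (p + q - t)) * K t := by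
    rw [integral_eq_integral_left_half_add_reflect (g := fun t => f t * K t)
      ((hf.mul hK).intervalIntegrable_of_Icc hpq.le)]
    refine intervalIntegral.integral_congr fun t ht => ?_
    rw [uIcc_of_le (by linarith)] at ht
    simp only [K, trapezoidKernel_reflect hsym ⟨ht.1, by linarith [ht.2]⟩]
    ring
  have hpointwise : ∀ t ∈ Icc p c, |(f t - f (p + q - t)) * K t|
      ≤ M / ((q - p) / 2) * ((c - t) * ((c - t) * α + (t - p) * β)) := by
    intro t ht
    have hKt : |K t| ≤ M * (c - t) := by
      have h := abs_trapezoidKernel_le hWM ⟨ht.1, by linarith [ht.2]⟩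
      rwa [← hc, abs_of_nonpos (a := t - c) (by linarith [ht.2]), neg_sub] at h
    rw [abs_mul]
    calc _ ≤ _ * (M * (c - t)) :=
          mul_le_mul (hf_le t ht) hKt (abs_nonneg _) ((abs_nonneg _).trans (hf_le t ht))
      _ = _ := by ring
  have hfolded : ContinuousOn (fun t => (f t - f (p + q - t)) * K t) (Icc p c) := by
    have hsub : Icc p c ⊆ Icc p q := Icc_subset_Icc_right (by linarith)
    refine ((hf.mono hsub).sub (hf.comp (by fun_prop) fun t ht => ?_)).mul (hK.mono hsub)
    constructor <;> linarith [ht.1, ht.2]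
  rw [hfold]
  calc _ ≤ ∫ t in p..c, |(f t - f (p + q - t)) * K t| :=
        intervalIntegral.abs_integral_le_integral_abs (by linarith)
    _ ≤ ∫ t in p..c, M / ((q - p) / 2) * ((c - t) * ((c - t) * α + (t - p) * β)) :=
        intervalIntegral.integral_mono_on (by linarith)
          (hfolded.abs.intervalIntegrable_of_Icc (by linarith))
          (Continuous.intervalIntegrable (by fun_prop) _ _) hpointwise
    _ = _ := by
        have hqp : q - p ≠ 0 := sub_ne_zero.mpr hpq.ne'
        rw [intervalIntegral.integral_const_mul, integral_sub_mul_interp, hc]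
        field_simp
        ring

theorem abs_integral_mul_sub_trapezoid_le {U : Set ℝ} (hU : IsOpen U) {m p q M : ℝ} (hm : m ≠ 0)
    (hpq : p < q) (hpqU : Icc p q ⊆ U) (hmid : (p + q) / (2 * m) ∈ U) {G W : ℝ → ℝ}
    (hG : ContDiffOn ℝ 1 G U) (hG' : MConvexOn m U fun t => |deriv G t|)
    (hW : ContinuousOn W (Icc p q)) (hsym : ∀ t ∈ Icc p q, W (p + q - t) = W t)
    (hWM : ∀ t ∈ Icc p q, |W t| ≤ M) :
    |(∫ t in p..q, W t * G t) - (G p + G q) / 2 * ∫ t in p..q, W t|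
      ≤ (q - p) ^ 2 / 4 * M * (1 / 3 * (|deriv G p| + |deriv G q|)
        + m / 3 * |deriv G ((p + q) / (2 * m))|) := by
  have hderiv : ContinuousOn (deriv G) (Icc p q) :=
    (hG.continuousOn_deriv_of_isOpen hU le_rfl).mono hpqU
  have hGd : ∀ t ∈ Ioo p q, HasDerivAt G (deriv G t) t := fun t ht =>
    ((hG.contDiffAt (hU.mem_nhds (hpqU (Ioo_subset_Icc_self ht)))).differentiableAt
      one_ne_zero).hasDerivAt
  rw [integral_mul_sub_trapezoid_eq hpq.le hW hsym (hG.continuousOn.mono hpqU) hGd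
    (hderiv.intervalIntegrable_of_Icc hpq.le), abs_neg]
  convert abs_integral_mul_trapezoidKernel_le hpq hderiv hW hsym hWM fun t ht =>
    hG'.abs_sub_reflect_le hm hpq (hpqU (left_mem_Icc.2 hpq.le)) (hpqU (right_mem_Icc.2 hpq.le))
      hmid ht using 1
  ring

theorem quadrature_error_bound_general
    (ν μ m a b : ℝ) (hm : m ∈ Set.Ioc (0:ℝ) 1)
    (i : ℕ) (x : ℕ → ℝ)
    (hx0 : x 0 = ν) (hxi : x i = μ)
    (hxmono : ∀ j < i, x j < x (j + 1))
    (hab : Set.Icc ν μ ⊆ Set.Ioo a b)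
    (hmid : ∀ j < i, (x j + x (j + 1)) / (2 * m) ∈ Set.Ioo a b)
    (G W : ℝ → ℝ)
    (hG : ContDiffOn ℝ 1 G (Set.Ioo a b))
    (hG' : ∀ u ∈ Set.Ioo a b, ∀ v ∈ Set.Ioo a b, ∀ γ ∈ Set.Icc (0:ℝ) 1,
      |deriv G (γ * u + m * (1 - γ) * v)| ≤ γ * |deriv G u| + m * (1 - γ) * |deriv G v|)
    (hWnonneg : ∀ t ∈ Set.Icc ν μ, 0 ≤ W t)
    (hWcont : ContinuousOn W (Set.Icc ν μ))
    (hWsym : ∀ j < i, ∀ t ∈ Set.Icc (x j) (x (j + 1)), W (x j + x (j + 1) - t) = W t) :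
    |(∫ t in ν..μ, W t * G t)
        - ∑ j ∈ Finset.range i,
            (G (x j) + G (x (j + 1))) / 2 * ∫ t in (x j)..(x (j + 1)), W t|
      ≤ ∑ j ∈ Finset.range i,
          (x (j + 1) - x j) ^ 2 / 4 * sSup (W '' Set.Icc ν μ) *
            ((1/3) * (|deriv G (x j)| + |deriv G (x (j + 1))|)
              + (m / 3) * |deriv G ((x (j + 1) + x j) / (2 * m))|) := by
  have hmono : MonotoneOn x (Iic i) := (strictMonoOn_Iic_of_lt_succ hxmono).monotoneOn
  have hsub : ∀ j < i, Icc (x j) (x (j + 1)) ⊆ Icc ν μ := fun j hj => by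
    rw [← hx0, ← hxi]
    exact Icc_subset_Icc (hmono (Nat.zero_le i) hj.le (Nat.zero_le j))
      (hmono hj (mem_Iic.mpr le_rfl) hj)
  have hWM : ∀ t ∈ Icc ν μ, |W t| ≤ sSup (W '' Icc ν μ) := fun t ht =>
    (abs_of_nonneg (hWnonneg t ht)).trans_le
      (le_csSup (isCompact_Icc.image_of_continuousOn hWcont).bddAbove (mem_image_of_mem W ht))
  have hsplit : ∫ t in ν..μ, W t * G t
      = ∑ j ∈ Finset.range i, ∫ t in x j..x (j + 1), W t * G t := by
    rw [intervalIntegral.sum_integral_adjacent_intervals (f := fun t => W t * G t) fun j hj =>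
      ((hWcont.mul (hG.continuousOn.mono hab)).mono (hsub j hj)).intervalIntegrable_of_Icc
        (hxmono j hj).le, hx0, hxi]
  rw [hsplit, ← Finset.sum_sub_distrib]
  refine (Finset.abs_sum_le_sum_abs _ _).trans (Finset.sum_le_sum fun j hj => ?_)
  rw [Finset.mem_range] at hj
  rw [add_comm (x (j + 1))]
  exact abs_integral_mul_sub_trapezoid_le isOpen_Ioo hm.1.ne' (hxmono j hj) ((hsub j hj).trans hab)
    (hmid j hj) hG hG' (hWcont.mono (hsub j hj)) (hWsym j hj) fun t ht => hWM t (hsub j hj ht)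

theorem quadrature_error_bound
    (ν μ m a b : ℝ) (hm : m ∈ Set.Ioc (0:ℝ) 1)
    (i : ℕ) (hi : 0 < i) (x : ℕ → ℝ)
    (hx0 : x 0 = ν) (hxi : x i = μ)
    (hxmono : ∀ j < i, x j < x (j + 1))
    (hab : Set.Icc ν μ ⊆ Set.Ioo a b)
    (hmid : ∀ j < i, (x j + x (j + 1)) / (2 * m) ∈ Set.Ioo a b)
    (G W : ℝ → ℝ)
    (hG : ContDiffOn ℝ 1 G (Set.Ioo a b))
    (hG' : ∀ u ∈ Set.Ioo a b, ∀ v ∈ Set.Ioo a b, ∀ γ ∈ Set.Icc (0:ℝ) 1,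
      |deriv G (γ * u + m * (1 - γ) * v)| ≤ γ * |deriv G u| + m * (1 - γ) * |deriv G v|)
    (hWnonneg : ∀ t ∈ Set.Icc ν μ, 0 ≤ W t)
    (hWcont : ContinuousOn W (Set.Icc ν μ))
    (hWsym : ∀ j < i, ∀ t ∈ Set.Icc (x j) (x (j + 1)), W (x j + x (j + 1) - t) = W t) :
    |(∫ t in ν..μ, W t * G t)
        - ∑ j ∈ Finset.range i,
            (G (x j) + G (x (j + 1))) / 2 * ∫ t in (x j)..(x (j + 1)), W t|
      ≤ ∑ j ∈ Finset.range i,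
          (x (j + 1) - x j) ^ 2 / 4 * sSup (W '' Set.Icc ν μ) *
            ((1/3) * (|deriv G (x j)| + |deriv G (x (j + 1))|)
              + (m / 3) * |deriv G ((x (j + 1) + x j) / (2 * m))|) :=
  quadrature_error_bound_general ν μ m a b hm i x hx0 hxi hxmono hab hmid G W hG hG' hWnonneg hWcont
    hWsym
end
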